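/- arXiv:1902.03525 — 4 statements merged into one kernel-verified Lean document; each statement's English description precedes it below -/
import Mathlib

section
/- Let X and Y be i.i.d. real-valued integrable random variables with E[X] = E[Y] = 0. Then E|X - Y| ≥ E|X|. -/
open MeasureTheory ProbabilityTheory

/-- If X and Y are i.i.d. real-valued integrable random variables with mean zero,
then `E|X - Y| ≥ E|X|`. -/
theorem stmt_0 {Ω : Type*} [MeasureSpace Ω] [IsProbabilityMeasure (ℙ : Measure Ω)]
    (X Y : Ω → ℝ) (hindep : IndepFun X Y ℙ) (hid : IdentDistrib X Y ℙ ℙ)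
    (hX : Integrable X ℙ) (hY : Integrable Y ℙ)
    (hmean : ∫ ω, X ω ∂ℙ = 0) :
    ∫ ω, |X ω| ∂ℙ ≤ ∫ ω, |X ω - Y ω| ∂ℙ := by
  have hXm : AEMeasurable X ℙ := hX.aemeasurable
  have hYm : AEMeasurable Y ℙ := hY.aemeasurable
  set μ := Measure.map X ℙ with hμ
  set ν := Measure.map Y ℙ with hν
  have hpair : AEMeasurable (fun ω => (X ω, Y ω)) ℙ := hXm.prodMk hYm
  have hmap : Measure.map (fun ω => (X ω, Y ω)) ℙ = μ.prod ν :=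
    (indepFun_iff_map_prod_eq_prod_map_map hXm hYm).mp hindep
  have habs : AEStronglyMeasurable (fun p : ℝ × ℝ => |p.1 - p.2|) (μ.prod ν) := by
    apply Measurable.aestronglyMeasurable
    exact (measurable_fst.sub measurable_snd).abs
  have h1 : Integrable (fun p : ℝ × ℝ => |p.1 - p.2|) (μ.prod ν) := by
    rw [← hmap, integrable_map_measure (hmap ▸ habs) hpair]
    exact (hX.sub hY).abs
  have hνprob : IsProbabilityMeasure ν := Measure.isProbabilityMeasure_map hYm
  have hνid : Integrable (fun y : ℝ => y) ν :=
    (integrable_map_measure measurable_id.aestronglyMeasurable hYm).mpr hY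
  have hνmean : ∫ y, y ∂ν = 0 := by
    rw [hν, integral_map (f := fun y : ℝ => y) hYm measurable_id.aestronglyMeasurable]
    rw [← hid.integral_eq]; exact hmean
  -- rewrite RHS
  have hRHS : ∫ ω, |X ω - Y ω| ∂ℙ = ∫ x, ∫ y, |x - y| ∂ν ∂μ := by
    rw [← MeasureTheory.integral_prod _ h1, ← hmap,
      integral_map hpair (hmap ▸ habs)]
  have hLHS : ∫ ω, |X ω| ∂ℙ = ∫ x, |x| ∂μ := by
    rw [hμ, integral_map hXm]
    exact measurable_abs.aestronglyMeasurable
  rw [hLHS, hRHS]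
  have hint_outer : Integrable (fun x => ∫ y, |x - y| ∂ν) μ := h1.integral_prod_left
  have hint_abs : Integrable (fun x : ℝ => |x|) μ := by
    rw [hμ, integrable_map_measure measurable_abs.aestronglyMeasurable hXm]
    exact hX.abs
  apply integral_mono hint_abs hint_outer
  intro x
  have hint : Integrable (fun y : ℝ => x - y) ν := (integrable_const x).sub hνid
  have : |x| = |∫ y, (x - y) ∂ν| := by
    rw [integral_sub (integrable_const x) hνid, integral_const, hνmean]
    simp
  show |x| ≤ ∫ y, |x - y| ∂ν
  rw [this]
  calc |∫ y, (x - y) ∂ν| ≤ ∫ y, |x - y| ∂ν := by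
        simpa using norm_integral_le_integral_norm (fun y => x - y) (μ := ν)
end

section
/- For every ρ ∈ (−1, 1), the relative efficiency 4 · [1/9 − ((2/π)·arcsin(ρ/2))²] · (π²/4) · 1/(1−ρ²) is at least π²/9 and at most 2√3·π/9; in particular it is bounded above by 1.21 and bounded below by 1. -/
/-!
Put `ρ = 2 sin t` with `0 ≤ t ≤ π/6` (the ratio is even in `ρ`); the efficiency becomes
`(π²/9 - 4t²) / (1 - 4 sin² t)`. The lower bound `π²/9` is the chord inequality
`sin t ≥ (3/π) t` for the concave sine on `[0, π/6]`. For the upper bound put `u = 2t`, so that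
`1 - 4 sin² t = 2 cos u - 1`, and let `C = (π/3) / sin (π/3) = 2√3π/9`: the function
`C (2 cos u - 1) + u²` has derivative `2 (u - C sin u) ≤ 0` on `[0, π/3]`, again by the chord
inequality, and it equals `π²/9` at `u = π/3`.
-/

open Real

theorem mul_sin_le_mul_sin {a x : ℝ} (ha : a ≤ π) (hx : 0 ≤ x) (hxa : x ≤ a) :
    x * sin a ≤ a * sin x := by
  rcases hx.eq_or_lt with rfl | hx
  · simp
  have hslope := strictConcaveOn_sin_Icc.concaveOn.slope_anti (x := 0) ⟨le_rfl, pi_pos.le⟩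
    ⟨⟨hx.le, hxa.trans ha⟩, hx.ne'⟩ ⟨⟨hx.le.trans hxa, ha⟩, (hx.trans_le hxa).ne'⟩ hxa
  simp only [slope_def_field, sub_zero, sin_zero] at hslope
  rwa [div_le_div_iff₀ (hx.trans_le hxa) hx, mul_comm, mul_comm (sin x)] at hslope

theorem pi_sq_div_nine_mul_one_sub_four_sin_sq_le {t : ℝ} (ht₀ : 0 ≤ t) (ht : t ≤ π / 6) :
    π ^ 2 / 9 * (1 - 4 * sin t ^ 2) ≤ π ^ 2 / 9 - 4 * t ^ 2 := by
  have hchord := mul_sin_le_mul_sin (by linarith [pi_pos]) ht₀ ht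
  rw [sin_pi_div_six] at hchord
  have h3t : 0 ≤ 3 * t := by linarith
  nlinarith [mul_le_mul h3t (by linarith : 3 * t ≤ π * sin t) h3t (by nlinarith [pi_pos])]

theorem pi_sq_div_nine_sub_sq_le {u : ℝ} (hu₀ : 0 ≤ u) (hu : u ≤ π / 3) :
    π ^ 2 / 9 - u ^ 2 ≤ 2 * √3 * π / 9 * (2 * cos u - 1) := by
  set g : ℝ → ℝ := fun u ↦ 2 * √3 * π / 9 * (2 * cos u - 1) + u ^ 2
  have hg : ∀ u, HasDerivAt g (2 * √3 * π / 9 * (2 * -sin u) + 2 * u) u := fun u ↦ by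
    have := ((((hasDerivAt_cos u).const_mul 2).sub_const 1).const_mul (2 * √3 * π / 9)).add
      (hasDerivAt_pow 2 u)
    exact this.congr_deriv (by ring)
  have hanti : AntitoneOn g (Set.Icc 0 (π / 3)) := by
    refine antitoneOn_of_hasDerivWithinAt_nonpos (convex_Icc _ _)
      (fun u _ ↦ (hg u).continuousAt.continuousWithinAt) (fun u _ ↦ (hg u).hasDerivWithinAt) ?_
    rw [interior_Icc]
    rintro v ⟨hv₀, hv⟩
    have hchord := mul_sin_le_mul_sin (a := π / 3) (by linarith [pi_pos]) hv₀.le hv.le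
    rw [sin_pi_div_three] at hchord
    nlinarith [mul_le_mul_of_nonneg_left hchord (sqrt_nonneg 3),
      sq_sqrt (show (0:ℝ) ≤ 3 by norm_num)]
  have hend : g (π / 3) = π ^ 2 / 9 := by
    simp only [g, cos_pi_div_three]; ring
  have := hanti ⟨hu₀, hu⟩ ⟨by positivity, le_rfl⟩ hu
  simp only [hend, g] at this
  linarith

theorem arcsin_half_sq_bounds {ρ : ℝ} (hρ : |ρ| ≤ 1) :
    π ^ 2 / 9 * (1 - ρ ^ 2) ≤ π ^ 2 / 9 - 4 * arcsin (ρ / 2) ^ 2 ∧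
      π ^ 2 / 9 - 4 * arcsin (ρ / 2) ^ 2 ≤ 2 * √3 * π / 9 * (1 - ρ ^ 2) := by
  wlog hρ₀ : 0 ≤ ρ generalizing ρ
  · simpa [neg_div, arcsin_neg] using this (ρ := -ρ) (by rwa [abs_neg]) (by linarith)
  have hρ₁ := (abs_le.mp hρ).2
  set t := arcsin (ρ / 2)
  have hsin : sin t = ρ / 2 := sin_arcsin (by linarith) (by linarith)
  have ht₀ : 0 ≤ t := arcsin_nonneg.mpr (by linarith)
  have ht : t ≤ π / 6 := by
    calc t ≤ arcsin (1 / 2) := arcsin_le_arcsin (by linarith)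
      _ = π / 6 := by rw [← sin_pi_div_six, arcsin_sin] <;> linarith [pi_pos]
  have hlower := pi_sq_div_nine_mul_one_sub_four_sin_sq_le ht₀ ht
  have hupper := pi_sq_div_nine_sub_sq_le (u := 2 * t) (by linarith) (by linarith)
  rw [cos_two_mul_eq_one_sub] at hupper
  rw [hsin] at hlower hupper
  constructor <;> linarith

theorem one_le_pi_sq_div_nine : 1 ≤ π ^ 2 / 9 := by
  nlinarith [pi_gt_three]

theorem two_mul_sqrt_three_mul_pi_div_nine_le : 2 * √3 * π / 9 ≤ 1.21 := by
  have hsqrt : √3 ≤ 1.7321 := (sqrt_le_left (by norm_num)).mpr (by norm_num)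
  nlinarith [pi_lt_d4, pi_pos, sqrt_nonneg 3]

/-- For every `ρ ∈ (−1, 1)`, the relative efficiency
`4 [1/9 − ((2/π) arcsin(ρ/2))²] (π²/4) / (1−ρ²)` lies between `π²/9` and
`2√3·π/9`; in particular it is at least `1` and at most `1.21`. -/
theorem stmt_4 (ρ : ℝ) (hρ : ρ ∈ Set.Ioo (-1 : ℝ) 1) :
    π ^ 2 / 9 ≤ 4 * (1 / 9 - ((2 / π) * arcsin (ρ / 2)) ^ 2) * (π ^ 2 / 4) *
        (1 / (1 - ρ ^ 2)) ∧
      4 * (1 / 9 - ((2 / π) * arcsin (ρ / 2)) ^ 2) * (π ^ 2 / 4) * (1 / (1 - ρ ^ 2))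
        ≤ 2 * Real.sqrt 3 * π / 9 ∧
      1 ≤ 4 * (1 / 9 - ((2 / π) * arcsin (ρ / 2)) ^ 2) * (π ^ 2 / 4) *
        (1 / (1 - ρ ^ 2)) ∧
      4 * (1 / 9 - ((2 / π) * arcsin (ρ / 2)) ^ 2) * (π ^ 2 / 4) * (1 / (1 - ρ ^ 2))
        ≤ 1.21 := by
  have hρ₂ : 0 < 1 - ρ ^ 2 := by nlinarith [hρ.1, hρ.2]
  have hsimp : 4 * (1 / 9 - ((2 / π) * arcsin (ρ / 2)) ^ 2) * (π ^ 2 / 4) * (1 / (1 - ρ ^ 2))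
      = (π ^ 2 / 9 - 4 * arcsin (ρ / 2) ^ 2) / (1 - ρ ^ 2) := by
    field_simp [pi_ne_zero]
    ring
  obtain ⟨hlower, hupper⟩ := arcsin_half_sq_bounds (abs_le.mpr ⟨hρ.1.le, hρ.2.le⟩)
  rw [hsimp]
  have hge := (le_div_iff₀ hρ₂).mpr hlower
  have hle := (div_le_iff₀ hρ₂).mpr hupper
  exact ⟨hge, hle, one_le_pi_sq_div_nine.trans hge,
    hle.trans two_mul_sqrt_three_mul_pi_div_nine_le⟩
end

section
/- (Gaussian inequality for symmetric unimodal distributions) Let X be a real random variable with a symmetric unimodal distribution with mode at 0 and variance σ² < ∞. Then for every k > 0, P(|X| ≥ kσ) ≤ 1/(1 + k/√3). -/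
/-!
Put `t = kσ`, `a = ∫₀ᵗ f` and `b = ∫ₜ^∞ f`. By symmetry `P(|X| ≥ t) = 2b` and `a + b = 1/2`.
Since `f` is nonincreasing on `[0, ∞)`, `t f(t) ≤ a`, so on `(t, ∞)` the density is bounded by
`a / t`. A density of mass `b` bounded by `a / t` has the least second moment on `(t, ∞)` when it
is spread uniformly right next to `t` (the bathtub principle), which gives
`t² b² (a + b) ≤ 3 a² ∫ₜ^∞ x² f ≤ 3 a² σ² / 2`. Thus `k b ≤ √3 a = √3 (1/2 - b)`, which is the
claimed bound for `2b`.
-/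

open MeasureTheory ProbabilityTheory Set

lemma mul_integral_sub_le_integral_Ioi_sub_mul_of_monotoneOn {φ g : ℝ → ℝ} {t s M : ℝ}
    (hts : t ≤ s) (hφ : MonotoneOn φ (Ici t)) (hg0 : ∀ x ∈ Ioi s, 0 ≤ g x)
    (hgM : ∀ x ∈ Ioo t s, g x ≤ M)
    (hg : IntegrableOn g (Ioi t)) (hφg : IntegrableOn (fun x => φ x * g x) (Ioi t)) :
    M * ∫ x in t..s, (φ x - φ s) ≤ ∫ x in Ioi t, (φ x - φ s) * g x := by
  have hφ_le : ∀ x ∈ Icc t s, φ x ≤ φ s := fun x hx => hφ hx.1 (mem_Ici.mpr hts) hx.2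
  have hint : IntegrableOn (fun x => (φ x - φ s) * g x) (Ioi t) := by
    simpa only [sub_mul, Pi.sub_def] using hφg.sub (hg.const_mul (φ s))
  rw [← intervalIntegral.integral_const_mul,
    ← intervalIntegral.integral_interval_add_Ioi hint (hint.mono_set (Ioi_subset_Ioi hts))]
  have hnear : ∫ x in t..s, M * (φ x - φ s) ≤ ∫ x in t..s, (φ x - φ s) * g x := by
    refine intervalIntegral.integral_mono_on_of_le_Ioo hts ?_ ?_ fun x hx => ?_
    · exact ((hφ.mono (uIcc_of_le hts ▸ Icc_subset_Ici_self)).intervalIntegrable.sub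
        intervalIntegrable_const).const_mul M
    · exact (intervalIntegrable_iff_integrableOn_Ioc_of_le hts).mpr
        (hint.mono_set Ioc_subset_Ioi_self)
    · rw [mul_comm]
      exact mul_le_mul_of_nonpos_left (hgM x hx)
        (sub_nonpos.mpr (hφ_le x (Ioo_subset_Icc_self hx)))
  have hfar : 0 ≤ ∫ x in Ioi s, (φ x - φ s) * g x :=
    setIntegral_nonneg measurableSet_Ioi fun x hx => mul_nonneg
      (sub_nonneg.mpr (hφ (mem_Ici.mpr hts) (mem_Ici.mpr (hts.trans hx.le)) hx.le)) (hg0 x hx)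
  linarith

/-- The left side is the second moment on `(t, ∞)` of `M` times the indicator of
`(t, t + b / M)`, the density of mass `b` bounded by `M` that lies closest to `t`. -/
lemma le_integral_Ioi_sq_mul_of_le_const {g : ℝ → ℝ} {t M b : ℝ} (ht : 0 ≤ t) (hM : 0 < M)
    (hg0 : ∀ x ∈ Ioi t, 0 ≤ g x) (hgM : ∀ x ∈ Ioi t, g x ≤ M)
    (hg : IntegrableOn g (Ioi t)) (hx2g : IntegrableOn (fun x => x ^ 2 * g x) (Ioi t))
    (hb : ∫ x in Ioi t, g x = b) :
    t ^ 2 * b + t * b ^ 2 / M + b ^ 3 / (3 * M ^ 2) ≤ ∫ x in Ioi t, x ^ 2 * g x := by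
  have hb0 : 0 ≤ b := hb ▸ setIntegral_nonneg measurableSet_Ioi hg0
  set s := t + b / M with hs
  have hts : t ≤ s := le_add_of_nonneg_right (div_nonneg hb0 hM.le)
  have hsq : MonotoneOn (fun x : ℝ => x ^ 2) (Ici t) := fun x hx y _ hxy =>
    pow_le_pow_left₀ (ht.trans hx) hxy 2
  have key := mul_integral_sub_le_integral_Ioi_sub_mul_of_monotoneOn hts hsq
    (fun x hx => hg0 x (lt_of_le_of_lt hts hx)) (fun x hx => hgM x hx.1) hg hx2g
  have hleft : ∫ x in t..s, (x ^ 2 - s ^ 2) = (s ^ 3 - t ^ 3) / 3 - s ^ 2 * (s - t) := by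
    rw [intervalIntegral.integral_sub ((continuous_pow 2).intervalIntegrable _ _)
      intervalIntegrable_const, integral_pow, intervalIntegral.integral_const, smul_eq_mul]
    ring
  have hright :
      ∫ x in Ioi t, (x ^ 2 - s ^ 2) * g x = (∫ x in Ioi t, x ^ 2 * g x) - s ^ 2 * b := by
    simp only [sub_mul]
    rw [integral_sub hx2g (hg.const_mul _), integral_const_mul, hb]
  rw [hleft, hright] at key
  have hmass : M * (s - t) = b := by rw [hs]; field_simp; ring
  have hexpand :
      M * ((s ^ 3 - t ^ 3) / 3 - s ^ 2 * (s - t)) = M * (s ^ 3 - t ^ 3) / 3 - s ^ 2 * b := by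
    rw [← hmass]; ring
  have hval : M * (s ^ 3 - t ^ 3) / 3 = t ^ 2 * b + t * b ^ 2 / M + b ^ 3 / (3 * M ^ 2) := by
    rw [hs]; field_simp; ring
  linarith

lemma sq_mul_sq_mul_le_of_antitoneOn {f : ℝ → ℝ} {t : ℝ} (ht : 0 < t) (hf0 : ∀ x, 0 ≤ f x)
    (hmono : AntitoneOn f (Ici 0)) (hf : IntegrableOn f (Ioi t))
    (hx2f : IntegrableOn (fun x => x ^ 2 * f x) (Ioi t)) :
    t ^ 2 * (∫ x in Ioi t, f x) ^ 2 * ((∫ x in 0..t, f x) + ∫ x in Ioi t, f x) ≤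
      3 * (∫ x in 0..t, f x) ^ 2 * ∫ x in Ioi t, x ^ 2 * f x := by
  set a := ∫ x in 0..t, f x
  set b := ∫ x in Ioi t, f x
  set V := ∫ x in Ioi t, x ^ 2 * f x
  have hb0 : 0 ≤ b := setIntegral_nonneg measurableSet_Ioi fun x _ => hf0 x
  have hV0 : 0 ≤ V :=
    setIntegral_nonneg measurableSet_Ioi fun x _ => mul_nonneg (sq_nonneg x) (hf0 x)
  have hle : ∀ x ∈ Ioi t, f x ≤ f t := fun x hx =>
    hmono (mem_Ici.mpr ht.le) (mem_Ici.mpr (ht.le.trans hx.le)) hx.le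
  have hta : t * f t ≤ a := by
    have := intervalIntegral.integral_mono_on (μ := volume) ht.le intervalIntegrable_const
      ((hmono.mono (uIcc_of_le ht.le ▸ Icc_subset_Ici_self)).intervalIntegrable)
      fun x hx => hmono hx.1 (mem_Ici.mpr ht.le) hx.2
    simpa using this
  rcases (hf0 t).eq_or_lt with hzero | hpos
  · have hb : b = 0 := le_antisymm
      (setIntegral_nonpos measurableSet_Ioi fun x hx => hzero ▸ hle x hx) hb0
    rw [hb]
    linarith [mul_nonneg (sq_nonneg a) hV0]
  · have ha : 0 < a := (mul_pos ht hpos).trans_le hta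
    have hM : ∀ x ∈ Ioi t, f x ≤ a / t := fun x hx =>
      (hle x hx).trans ((le_div_iff₀ ht).mpr (by linarith))
    have h := le_integral_Ioi_sq_mul_of_le_const ht.le (div_pos ha ht) (fun x _ => hf0 x) hM
      hf hx2f rfl
    have hsubst : t ^ 2 * b + t * b ^ 2 / (a / t) + b ^ 3 / (3 * (a / t) ^ 2) =
        t ^ 2 * (3 * a ^ 2 * b + 3 * a * b ^ 2 + b ^ 3) / (3 * a ^ 2) := by
      field_simp
    rw [hsubst, div_le_iff₀ (by positivity)] at h
    nlinarith [mul_nonneg (mul_nonneg (sq_nonneg t) (mul_nonneg ha.le hb0))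
      (by linarith : 0 ≤ 3 * a + 2 * b)]

lemma integral_eq_two_mul_integral_Ioi_of_even {g : ℝ → ℝ} (hg : ∀ x, g (-x) = g x) :
    ∫ x, g x = 2 * ∫ x in Ioi 0, g x := by
  rw [← integral_comp_abs]
  congr 1 with x
  rcases abs_choice x with h | h <;> rw [h]
  exact (hg x).symm

lemma setIntegral_le_abs_eq_two_mul_integral_Ioi_of_even {g : ℝ → ℝ} (hg : ∀ x, g (-x) = g x)
    {t : ℝ} (ht : 0 < t) :
    ∫ x in {x | t ≤ |x|}, g x = 2 * ∫ x in Ioi t, g x := by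
  have hS : MeasurableSet {x : ℝ | t ≤ |x|} := measurableSet_le measurable_const measurable_abs
  have hpos : Ioi 0 ∩ {x : ℝ | t ≤ |x|} = Ici t := by
    ext x
    simp only [mem_inter_iff, mem_Ioi, mem_ofPred_eq, mem_Ici]
    constructor
    · rintro ⟨hx, h⟩
      rwa [abs_of_pos hx] at h
    · exact fun h => ⟨ht.trans_le h, h.trans (le_abs_self x)⟩
  rw [← integral_indicator hS, integral_eq_two_mul_integral_Ioi_of_even, setIntegral_indicator hS,
    hpos, integral_Ici_eq_integral_Ioi]
  intro x
  simp only [indicator_apply, mem_ofPred_eq, abs_neg, hg]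

section Density

variable {Ω : Type*} [MeasurableSpace Ω] {μ : Measure Ω} {X : Ω → ℝ} {f : ℝ → ℝ}

lemma integral_comp_eq_integral_mul_of_map_eq_withDensity (hX : AEMeasurable X μ)
    (hf : Measurable f) (hf0 : ∀ x, 0 ≤ f x)
    (hdens : μ.map X = volume.withDensity (fun x => ENNReal.ofReal (f x))) {g : ℝ → ℝ}
    (hg : AEStronglyMeasurable g (μ.map X)) :
    ∫ ω, g (X ω) ∂μ = ∫ x, g x * f x := by
  rw [← integral_map hX hg, hdens, integral_withDensity_eq_integral_toReal_smul
    hf.ennreal_ofReal (ae_of_all _ fun _ => ENNReal.ofReal_lt_top)]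
  simp only [ENNReal.toReal_ofReal (hf0 _), smul_eq_mul, mul_comm]

lemma integrable_mul_of_map_eq_withDensity (hX : AEMeasurable X μ)
    (hf : Measurable f) (hf0 : ∀ x, 0 ≤ f x)
    (hdens : μ.map X = volume.withDensity (fun x => ENNReal.ofReal (f x))) {g : ℝ → ℝ}
    (hg : AEStronglyMeasurable g (μ.map X)) (hgX : Integrable (fun ω => g (X ω)) μ) :
    Integrable (fun x => g x * f x) := by
  have h := (integrable_map_measure hg hX).mpr hgX
  rw [hdens, integrable_withDensity_iff hf.ennreal_ofReal
    (ae_of_all _ fun _ => ENNReal.ofReal_lt_top)] at h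
  simpa only [ENNReal.toReal_ofReal (hf0 _)] using h

lemma measure_preimage_toReal_eq_setIntegral_of_map_eq_withDensity (hX : AEMeasurable X μ)
    (hf : Measurable f) (hf0 : ∀ x, 0 ≤ f x)
    (hdens : μ.map X = volume.withDensity (fun x => ENNReal.ofReal (f x))) {S : Set ℝ}
    (hS : MeasurableSet S) :
    (μ (X ⁻¹' S)).toReal = ∫ x in S, f x := by
  rw [← Measure.map_apply_of_aemeasurable hX hS, hdens, withDensity_apply _ hS,
    integral_eq_lintegral_of_nonneg_ae (ae_of_all _ hf0) hf.aestronglyMeasurable.restrict]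

end Density

lemma two_mul_le_one_div_of_sq_mul_sq_le {a b V σ k : ℝ} (hσ : 0 < σ) (hk : 0 < k) (ha : 0 ≤ a)
    (hb : 0 ≤ b) (hab : a + b = 1 / 2) (hV : 2 * V ≤ σ ^ 2)
    (h : (k * σ) ^ 2 * b ^ 2 * (a + b) ≤ 3 * a ^ 2 * V) :
    2 * b ≤ 1 / (1 + k / √3) := by
  have h3 : √3 ^ 2 = 3 := Real.sq_sqrt (by norm_num)
  have hsq : (k * b) ^ 2 ≤ (√3 * a) ^ 2 := by
    refine le_of_mul_le_mul_left ?_ (pow_pos hσ 2)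
    rw [mul_pow √3, h3]
    rw [hab] at h
    nlinarith [mul_le_mul_of_nonneg_left hV (sq_nonneg a)]
  have hkb : k * b ≤ √3 * a :=
    (pow_le_pow_iff_left₀ (by positivity) (by positivity) two_ne_zero).mp hsq
  have hkb' : k / √3 * b ≤ a := by
    rw [div_mul_eq_mul_div, div_le_iff₀ (by positivity)]
    linarith
  rw [le_div_iff₀ (by positivity)]
  linarith

/-- Gaussian inequality for symmetric unimodal distributions: if `X` has a density `f`
(w.r.t. Lebesgue measure) which is symmetric about `0` and nonincreasing on `[0, ∞)`
(unimodal with mode `0`), with variance `σ²`, then for every `k > 0`,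
`P(|X| ≥ kσ) ≤ 1/(1 + k/√3)`. -/
theorem stmt_5 {Ω : Type*} [MeasureSpace Ω] [IsProbabilityMeasure (ℙ : Measure Ω)]
    (X : Ω → ℝ) (hX : Measurable X) (f : ℝ → ℝ) (hf : Measurable f)
    (hf0 : ∀ t, 0 ≤ f t)
    (hdens : Measure.map X ℙ = volume.withDensity (fun t => ENNReal.ofReal (f t)))
    (hsym : ∀ t, f (-t) = f t) (hmono : AntitoneOn f (Set.Ici 0))
    (σ : ℝ) (hσ : 0 < σ)
    (hL2 : Integrable (fun ω => (X ω) ^ 2) ℙ)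
    (hvar : ∫ ω, (X ω) ^ 2 ∂ℙ = σ ^ 2) :
    ∀ k : ℝ, 0 < k →
      (ℙ {ω | k * σ ≤ |X ω|}).toReal ≤ 1 / (1 + k / Real.sqrt 3) := by
  intro k hk
  have ht : 0 < k * σ := mul_pos hk hσ
  have hsq : AEStronglyMeasurable (fun x : ℝ => x ^ 2) (Measure.map X ℙ) :=
    (continuous_pow 2).aestronglyMeasurable
  have hf_int : Integrable f := by
    simpa using integrable_mul_of_map_eq_withDensity hX.aemeasurable hf hf0 hdens
      aestronglyMeasurable_const (integrable_const (1 : ℝ))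
  have hx2f := integrable_mul_of_map_eq_withDensity hX.aemeasurable hf hf0 hdens hsq hL2
  have hmass : (∫ x in 0..k * σ, f x) + ∫ x in Ioi (k * σ), f x = 1 / 2 := by
    have h := measure_preimage_toReal_eq_setIntegral_of_map_eq_withDensity hX.aemeasurable hf hf0
      hdens MeasurableSet.univ
    rw [preimage_univ, measure_univ, ENNReal.toReal_one, Measure.restrict_univ,
      integral_eq_two_mul_integral_Ioi_of_even hsym] at h
    rw [intervalIntegral.integral_interval_add_Ioi hf_int.integrableOn hf_int.integrableOn]
    linarith
  have hmoment : 2 * ∫ x in Ioi (k * σ), x ^ 2 * f x ≤ σ ^ 2 := by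
    rw [← hvar,
      integral_comp_eq_integral_mul_of_map_eq_withDensity hX.aemeasurable hf hf0 hdens hsq,
      integral_eq_two_mul_integral_Ioi_of_even fun x => by rw [neg_sq, hsym]]
    gcongr 2 * ?_
    exact setIntegral_mono_set hx2f.integrableOn
      (ae_of_all _ fun x => mul_nonneg (sq_nonneg x) (hf0 x)) (Ioi_subset_Ioi ht.le).eventuallyLE
  have htail : (ℙ {ω | k * σ ≤ |X ω|}).toReal = 2 * ∫ x in Ioi (k * σ), f x :=
    (measure_preimage_toReal_eq_setIntegral_of_map_eq_withDensity hX.aemeasurable hf hf0 hdens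
      (measurableSet_le measurable_const measurable_abs)).trans
      (setIntegral_le_abs_eq_two_mul_integral_Ioi_of_even hsym ht)
  rw [htail]
  exact two_mul_le_one_div_of_sq_mul_sq_le hσ hk
    (intervalIntegral.integral_nonneg ht.le fun x _ => hf0 x)
    (setIntegral_nonneg measurableSet_Ioi fun x _ => hf0 x) hmass hmoment
    (sq_mul_sq_mul_le_of_antitoneOn ht hf0 hmono hf_int.integrableOn hx2f.integrableOn)
end

section
/- Let f(t) = Σ_{k=1}^K π_k f_k(t) be a finite mixture of symmetric unimodal probability densities f_k (each symmetric about 0), with mixing weights π_k ≥ 0 summing to 1. If Z₁, Z₂ are i.i.d. with density f, then the density of Z₁ − Z₂ can be written as π₀* f₀*(t) + (1 − π₀*) f₁*(t), where f₀* is a symmetric unimodal density, f₁* is a symmetric density, and π₀* = Σ_k π_k² ≥ 1/K. -/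
open MeasureTheory
open scoped Convolution

/-- Key pointwise fact for symmetric unimodal functions. -/
lemma symm_uni_key {F : ℝ → ℝ} (hsym : ∀ t, F (-t) = F t)
    (huni : AntitoneOn F (Set.Ici 0)) {x y : ℝ} (h : |x| ≤ |y|) : F y ≤ F x := by
  have habs : ∀ z : ℝ, F |z| = F z := by
    intro z
    rcases le_or_gt 0 z with hz | hz
    · rw [abs_of_nonneg hz]
    · rw [abs_of_neg hz, hsym]
  calc F y = F |y| := (habs y).symm
    _ ≤ F |x| := huni (Set.mem_Ici.mpr (abs_nonneg x)) (Set.mem_Ici.mpr (abs_nonneg y)) h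
    _ = F x := habs x

/-- Main auxiliary lemma: properties of the autocorrelation `t ↦ ∫ F(t+s) F(s) ds`
of a symmetric unimodal probability density `F`. -/
lemma autocorr_props (F : ℝ → ℝ) (hmeas : Measurable F) (h0 : ∀ t, 0 ≤ F t)
    (hint : Integrable F volume) (h1 : ∫ t, F t = 1)
    (hsym : ∀ t, F (-t) = F t) (huni : AntitoneOn F (Set.Ici 0)) :
    (∀ t, 0 ≤ ∫ s, F (t + s) * F s) ∧
    ((∫ t, ∫ s, F (t + s) * F s) = 1) ∧
    (∀ t, (∫ s, F (-t + s) * F s) = ∫ s, F (t + s) * F s) ∧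
    AntitoneOn (fun t => ∫ s, F (t + s) * F s) (Set.Ici 0) := by
  have hkey : ∀ x y : ℝ, |x| ≤ |y| → F y ≤ F x := fun x y h => symm_uni_key hsym huni h
  have hb : ∀ x : ℝ, F x ≤ F 0 := by
    intro x
    exact hkey 0 x (by simp)
  -- general integrability of shifted products
  have hint1 : ∀ a b : ℝ, Integrable (fun s => F (a + s) * F (b + s)) volume := by
    intro a b
    have hmi : Integrable (fun s => F 0 * F (b + s)) volume :=
      (hint.comp_add_left b).const_mul (F 0)
    refine hmi.mono' ?_ ?_
    · exact ((hmeas.comp (measurable_const_add a)).mul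
        (hmeas.comp (measurable_const_add b))).aestronglyMeasurable
    · filter_upwards with s
      rw [Real.norm_eq_abs, abs_of_nonneg (mul_nonneg (h0 _) (h0 _))]
      exact mul_le_mul_of_nonneg_right (hb _) (h0 _)
  have hint2 : ∀ a : ℝ, Integrable (fun s => F (a + s) * F s) volume := by
    intro a
    have := hint1 a 0
    simpa only [zero_add] using this
  refine ⟨?_, ?_, ?_, ?_⟩
  · -- nonnegativity
    intro t
    exact integral_nonneg fun s => mul_nonneg (h0 _) (h0 _)
  · -- total integral is 1, via the convolution API
    have hconv : ∀ t : ℝ, (∫ s, F (t + s) * F s)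
        = (F ⋆[ContinuousLinearMap.mul ℝ ℝ, volume] F) t := by
      intro t
      have e1 : (∫ s, F (t + s) * F s) = ∫ u, F u * F (u - t) := by
        have := integral_add_left_eq_self (μ := volume) (fun u : ℝ => F u * F (u - t)) t
        calc (∫ s, F (t + s) * F s) = ∫ s, F (t + s) * F ((t + s) - t) := by
              congr 1; ext s; congr 2; ring
          _ = ∫ u, F u * F (u - t) := this
      rw [e1]
      have e2 : ∀ u : ℝ, F (u - t) = F (t - u) := by
        intro u
        rw [← hsym (t - u), neg_sub]
      simp only [convolution, ContinuousLinearMap.mul_apply']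
      exact integral_congr_ae (Filter.Eventually.of_forall fun u => by
        show F u * F (u - t) = F u * F (t - u); rw [e2 u])
    calc (∫ t, ∫ s, F (t + s) * F s)
        = ∫ t, (F ⋆[ContinuousLinearMap.mul ℝ ℝ, volume] F) t :=
          integral_congr_ae (Filter.Eventually.of_forall fun t => hconv t)
      _ = (ContinuousLinearMap.mul ℝ ℝ) (∫ t, F t) (∫ t, F t) :=
          integral_convolution (ContinuousLinearMap.mul ℝ ℝ) hint hint
      _ = 1 := by rw [h1]; simp
  · -- symmetry
    intro t
    have := integral_neg_eq_self (fun s => F (-t + s) * F s) volume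
    calc (∫ s, F (-t + s) * F s) = ∫ s, F (-t + -s) * F (-s) := this.symm
      _ = ∫ s, F (t + s) * F s := by
          refine integral_congr_ae (Filter.Eventually.of_forall fun s => ?_)
          show F (-t + -s) * F (-s) = F (t + s) * F s
          have e1 : (-t + -s : ℝ) = -(t + s) := by ring
          rw [e1, hsym, hsym]
  · -- unimodality
    intro t₁ ht₁ t₂ ht₂ h12
    simp only [Set.mem_Ici] at ht₁ ht₂
    set p : ℝ := (t₁ + t₂) / 2 with hp
    have hp0 : 0 ≤ p := by positivity
    set h : ℝ → ℝ := fun s => F (t₁ + s) * F s - F (t₂ + s) * F s with hh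
    set h' : ℝ → ℝ := fun s =>
      F (t₁ + t₂ + s) * F (t₂ + s) - F (t₁ + t₂ + s) * F (t₁ + s) with hh'
    have hInth : Integrable h volume := (hint2 t₁).sub (hint2 t₂)
    have hInth' : Integrable h' volume := (hint1 (t₁ + t₂) t₂).sub (hint1 (t₁ + t₂) t₁)
    have hdiff : (∫ s, F (t₁ + s) * F s) - (∫ s, F (t₂ + s) * F s) = ∫ s, h s :=
      (integral_sub (hint2 t₁) (hint2 t₂)).symm
    -- split the integral of h
    have hsplit : (∫ s, h s) = (∫ s in Set.Iio (-p), h s) + ∫ s in Set.Ici (-p), h s :=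
      (intervalIntegral.integral_Iio_add_Ici hInth.integrableOn hInth.integrableOn).symm
    -- reflection: the integral over Iio (-p) equals the integral of h' over Ioi (-p)
    have hrefl : ∀ s : ℝ, h (-(t₁ + t₂ + s)) = h' s := by
      intro s
      simp only [hh, hh']
      have e1 : t₁ + -(t₁ + t₂ + s) = -(t₂ + s) := by ring
      have e2 : t₂ + -(t₁ + t₂ + s) = -(t₁ + s) := by ring
      rw [e1, e2, hsym, hsym, hsym]
      ring_nf
    have hIio : (∫ s in Set.Iio (-p), h s) = ∫ s in Set.Ioi (-p), h' s := by
      set φ : ℝ → ℝ := (Set.Iio (-p)).indicator h with hφ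
      have i1 : (∫ s in Set.Iio (-p), h s) = ∫ s, φ s :=
        (integral_indicator measurableSet_Iio).symm
      have i2 : (∫ s, φ s) = ∫ s, φ (-s) := (integral_neg_eq_self φ volume).symm
      have i3 : (∫ s, φ (-s)) = ∫ s, φ (-(t₁ + t₂ + s)) :=
        (integral_add_left_eq_self (μ := volume) (fun s : ℝ => φ (-s)) (t₁ + t₂)).symm
      have i4 : ∀ s : ℝ, φ (-(t₁ + t₂ + s)) = (Set.Ioi (-p)).indicator h' s := by
        intro s
        by_cases hs : s ∈ Set.Ioi (-p)
        · have hmem : -(t₁ + t₂ + s) ∈ Set.Iio (-p) := by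
            simp only [Set.mem_Ioi] at hs
            simp only [Set.mem_Iio]
            have : 2 * p = t₁ + t₂ := by rw [hp]; ring
            linarith
          rw [hφ, Set.indicator_of_mem hmem, Set.indicator_of_mem hs, hrefl]
        · have hmem : -(t₁ + t₂ + s) ∉ Set.Iio (-p) := by
            simp only [Set.mem_Ioi, not_lt] at hs
            simp only [Set.mem_Iio, not_lt]
            have : 2 * p = t₁ + t₂ := by rw [hp]; ring
            linarith
          rw [hφ, Set.indicator_of_notMem hmem, Set.indicator_of_notMem hs]
      calc (∫ s in Set.Iio (-p), h s) = ∫ s, φ (-(t₁ + t₂ + s)) := by rw [i1, i2, i3]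
        _ = ∫ s, (Set.Ioi (-p)).indicator h' s :=
            integral_congr_ae (Filter.Eventually.of_forall i4)
        _ = ∫ s in Set.Ioi (-p), h' s := integral_indicator measurableSet_Ioi
    -- pointwise nonnegativity of h + h' on Ioi (-p)
    have hptwise : ∀ s ∈ Set.Ioi (-p), 0 ≤ h' s + h s := by
      intro s hs
      simp only [Set.mem_Ioi] at hs
      have h2p : 2 * p = t₁ + t₂ := by rw [hp]; ring
      have sub1 : F (t₁ + t₂ + s) ≤ F s := by
        apply hkey
        have hcs : (0:ℝ) ≤ t₁ + t₂ + s := by linarith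
        rw [abs_of_nonneg hcs]
        rw [abs_le]
        constructor <;> linarith
      have sub2 : F (t₂ + s) ≤ F (t₁ + s) := by
        apply hkey
        have hcs : (0:ℝ) ≤ t₂ + s := by linarith
        rw [abs_of_nonneg hcs]
        rw [abs_le]
        constructor <;> linarith
      have key : h' s + h s = (F s - F (t₁ + t₂ + s)) * (F (t₁ + s) - F (t₂ + s)) := by
        simp only [hh, hh']; ring
      rw [key]
      exact mul_nonneg (sub_nonneg.mpr sub1) (sub_nonneg.mpr sub2)
    have hfinal : 0 ≤ (∫ s, h s) := by
      rw [hsplit, hIio, integral_Ici_eq_integral_Ioi, ← integral_add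
        hInth'.integrableOn hInth.integrableOn]
      exact setIntegral_nonneg measurableSet_Ioi hptwise
    simp only
    linarith [hdiff ▸ hfinal]

/-- If `f = Σ_k π_k f_k` is a finite mixture of probability densities which are
symmetric about `0` and unimodal (nonincreasing on `[0,∞)`), with weights `π_k ≥ 0`
summing to `1`, then the density `t ↦ ∫ f(t+s) f(s) ds` of the difference `Z₁ − Z₂`
of two i.i.d. variables with density `f` can be written as
`π₀* f₀* + (1 − π₀*) f₁*` where `f₀*` is a symmetric unimodal density, `f₁*` is a
symmetric density, and `π₀* = Σ_k π_k² ≥ 1/K`. -/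
theorem stmt_6 (K : ℕ) (hK : 0 < K) (π : Fin K → ℝ) (f : Fin K → ℝ → ℝ)
    (hπ : ∀ k, 0 ≤ π k) (hπ1 : ∑ k, π k = 1)
    (hfmeas : ∀ k, Measurable (f k)) (hf0 : ∀ k t, 0 ≤ f k t)
    (hfint : ∀ k, Integrable (f k) volume) (hf1 : ∀ k, ∫ t, f k t = 1)
    (hfsym : ∀ k t, f k (-t) = f k t) (hfuni : ∀ k, AntitoneOn (f k) (Set.Ici 0)) :
    ∃ f₀ f₁ : ℝ → ℝ,
      (∀ t, (∫ s, (∑ k, π k * f k (t + s)) * (∑ k, π k * f k s))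
          = (∑ k, (π k) ^ 2) * f₀ t + (1 - ∑ k, (π k) ^ 2) * f₁ t) ∧
      (∀ t, 0 ≤ f₀ t) ∧ (∫ t, f₀ t = 1) ∧ (∀ t, f₀ (-t) = f₀ t) ∧
        AntitoneOn f₀ (Set.Ici 0) ∧
      (∀ t, 0 ≤ f₁ t) ∧ (∫ t, f₁ t = 1) ∧ (∀ t, f₁ (-t) = f₁ t) ∧
      (1 / K : ℝ) ≤ ∑ k, (π k) ^ 2 := by
  set F : ℝ → ℝ := fun t => ∑ k, π k * f k t with hF
  have hmeas : Measurable F := by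
    apply Finset.measurable_sum
    intro k _
    exact (hfmeas k).const_mul (π k)
  have h0 : ∀ t, 0 ≤ F t := fun t =>
    Finset.sum_nonneg fun k _ => mul_nonneg (hπ k) (hf0 k t)
  have hintF : Integrable F volume :=
    integrable_finset_sum _ fun k _ => (hfint k).const_mul (π k)
  have h1 : (∫ t, F t) = 1 := by
    rw [hF]
    rw [integral_finset_sum _ fun k _ => (hfint k).const_mul (π k)]
    have : ∀ k, (∫ t, π k * f k t) = π k := by
      intro k
      rw [integral_const_mul, hf1 k, mul_one]
    simp only [this, hπ1]
  have hsymF : ∀ t, F (-t) = F t := by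
    intro t
    simp only [hF]
    exact Finset.sum_congr rfl fun k _ => by rw [hfsym k t]
  have huniF : AntitoneOn F (Set.Ici 0) := by
    intro a ha b hb hab
    exact Finset.sum_le_sum fun k _ =>
      mul_le_mul_of_nonneg_left (hfuni k ha hb hab) (hπ k)
  obtain ⟨hg0, hg1, hgsym, hguni⟩ :=
    autocorr_props F hmeas h0 hintF h1 hsymF huniF
  refine ⟨fun t => ∫ s, F (t + s) * F s, fun t => ∫ s, F (t + s) * F s,
    ?_, hg0, hg1, hgsym, hguni, hg0, hg1, hgsym, ?_⟩
  · intro t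
    have : (∫ s, (∑ k, π k * f k (t + s)) * (∑ k, π k * f k s))
        = ∫ s, F (t + s) * F s := rfl
    rw [this]
    ring
  · have hcs := sq_sum_le_card_mul_sum_sq (s := (Finset.univ : Finset (Fin K))) (f := π)
    rw [hπ1] at hcs
    simp only [Finset.card_univ, Fintype.card_fin] at hcs
    rw [div_le_iff₀ (by exact_mod_cast hK)]
    calc (1:ℝ) = 1 ^ 2 := by ring
      _ ≤ (K:ℝ) * ∑ k, (π k) ^ 2 := hcs
      _ = (∑ k, (π k) ^ 2) * K := by ring
end
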